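/- arXiv:1404.2547 — 6 statements merged into one kernel-verified Lean document; each statement's English description precedes it below -/
import Mathlib

section
/- Let $\gamma$ be a smooth curve in a pseudo-Riemannian manifold $M$ with velocity $X = \dot\gamma$ and $Y := \nabla_X X$, satisfying the circle equation $\nabla_X \nabla_X X = -\langle \nabla_X X, \nabla_X X\rangle \langle X,X\rangle X$ with initial conditions $\langle X,X\rangle = \pm 1$ and $\langle X,Y\rangle = 0$ at $t=0$. Then $\langle X,X\rangle$ is constant (i.e., $\gamma$ is a unit speed curve), $\langle X,Y\rangle = 0$ everywhere, and $\langle Y,Y\rangle$ is constant along $\gamma$. -/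
/-!
Write `a = ⟨X,X⟩`, `b = ⟨X,Y⟩`, `c = ⟨Y,Y⟩`. Metric compatibility and the circle equation give
`a' = 2b`, `b' = c (1 - a²)` and `c' = -2cab`. Since `a(0)² = 1`, we have
`1 - a² = -(a + a(0)) (a - a(0))`, so `(a - a(0), b)` solves a linear system with continuous
coefficients and zero initial value. Grönwall's inequality for `(a - a(0))² + b²` makes it vanish
identically, and then `c' = 0`.
-/

open Set

theorem eq_zero_of_norm_deriv_le_mul_norm {E : Type*} [NormedAddCommGroup E] [NormedSpace ℝ E]
    {f f' : ℝ → E} {k : ℝ → ℝ} (hf : ∀ t, HasDerivAt f (f' t) t) (hk : Continuous k)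
    (bound : ∀ t, ‖f' t‖ ≤ k t * ‖f t‖) {t₀ : ℝ} (h₀ : f t₀ = 0) (t : ℝ) : f t = 0 := by
  wlog hle : t₀ ≤ t generalizing f f' k t₀ t
  · -- Run time backwards: `s ↦ f (-s)` satisfies the same kind of bound.
    have hf_neg : ∀ s, HasDerivAt (fun s => f (-s)) (-f' (-s)) s := fun s =>
      ((hf (-s)).scomp s (hasDerivAt_neg s)).congr_deriv (by simp)
    simpa using this hf_neg (hk.comp continuous_neg) (fun s => by simpa using bound (-s))
      (t₀ := -t₀) (by simpa using h₀) (-t) (by linarith)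
  obtain ⟨K, hK⟩ := isCompact_Icc.exists_bound_of_continuousOn (hk.continuousOn (s := Icc t₀ t))
  refine eq_zero_of_abs_deriv_le_mul_abs_self_of_eq_zero_right (K := K)
    (fun s _ => (hf s).continuousAt.continuousWithinAt) (fun s _ => (hf s).hasDerivWithinAt) h₀
    (fun s hs => ?_) t ⟨hle, le_rfl⟩
  calc ‖f' s‖ ≤ k s * ‖f s‖ := bound s
    _ ≤ K * ‖f s‖ := by
      gcongr
      exact (le_abs_self _).trans (hK s (Ico_subset_Icc_self hs))

theorem eq_zero_of_hasDerivAt_linear_pair {u v p q : ℝ → ℝ} (hp : Continuous p) (hq : Continuous q)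
    (hu : ∀ t, HasDerivAt u (p t * v t) t) (hv : ∀ t, HasDerivAt v (q t * u t) t)
    {t₀ : ℝ} (hu₀ : u t₀ = 0) (hv₀ : v t₀ = 0) (t : ℝ) : u t = 0 ∧ v t = 0 := by
  have hE : ∀ s, HasDerivAt (fun s => u s ^ 2 + v s ^ 2) ((p s + q s) * (2 * u s * v s)) s :=
    fun s => (((hu s).fun_pow 2).add ((hv s).fun_pow 2)).congr_deriv (by ring)
  have bound : ∀ s, ‖(p s + q s) * (2 * u s * v s)‖ ≤ |p s + q s| * ‖u s ^ 2 + v s ^ 2‖ := by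
    intro s
    rw [norm_mul, Real.norm_eq_abs, Real.norm_eq_abs, Real.norm_eq_abs,
      abs_of_nonneg (by positivity : 0 ≤ u s ^ 2 + v s ^ 2)]
    gcongr
    exact abs_le.2 ⟨by nlinarith [sq_nonneg (u s + v s)], by nlinarith [sq_nonneg (u s - v s)]⟩
  have hE_zero := eq_zero_of_norm_deriv_le_mul_norm hE (hp.add hq).abs bound
    (t₀ := t₀) (by simp [hu₀, hv₀]) t
  constructor <;> nlinarith [sq_nonneg (u t), sq_nonneg (v t)]

-- `Y = ∇_X X` and `Z = ∇_X ∇_X X` enter only through the metric compatibility identities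
-- `hXX`, `hXY`, `hYY`.
/-- Circle equation lemma.  Along a curve in a pseudo-Riemannian manifold,
let `X` be the velocity field, `Y = ∇_X X` and `Z = ∇_X ∇_X X`, expressed here
through the metric-compatibility of covariant differentiation along the curve
(hypotheses `hXX`, `hXY`, `hYY`).  If the circle equation
`∇_X ∇_X X = -⟨∇_X X, ∇_X X⟩ ⟨X,X⟩ X` holds, with `⟨X,X⟩(0) = ±1` and
`⟨X,Y⟩(0) = 0`, then `⟨X,X⟩` is constant (unit speed), `⟨X,Y⟩ = 0` everywhere,
and `⟨Y,Y⟩` is constant along the curve. -/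
theorem circle_equation_invariants {V : Type*} [NormedAddCommGroup V]
    [NormedSpace ℝ V]
    (B : LinearMap.BilinForm ℝ V)
    (hsymm : ∀ x y : V, B x y = B y x)
    (X Y Z : ℝ → V)
    (hXX : ∀ t : ℝ, HasDerivAt (fun s => B (X s) (X s))
      (B (Y t) (X t) + B (X t) (Y t)) t)
    (hXY : ∀ t : ℝ, HasDerivAt (fun s => B (X s) (Y s))
      (B (Y t) (Y t) + B (X t) (Z t)) t)
    (hYY : ∀ t : ℝ, HasDerivAt (fun s => B (Y s) (Y s))
      (B (Z t) (Y t) + B (Y t) (Z t)) t)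
    (hcircle : ∀ t : ℝ, Z t = -(B (Y t) (Y t) * B (X t) (X t)) • X t)
    (hinit0 : B (X 0) (X 0) = 1 ∨ B (X 0) (X 0) = -1)
    (hinit1 : B (X 0) (Y 0) = 0) :
    (∀ t : ℝ, B (X t) (X t) = B (X 0) (X 0)) ∧
    (∀ t : ℝ, B (X t) (Y t) = 0) ∧
    (∀ t : ℝ, B (Y t) (Y t) = B (Y 0) (Y 0)) := by
  set a := fun t => B (X t) (X t)
  set b := fun t => B (X t) (Y t)
  set c := fun t => B (Y t) (Y t)
  have ha : ∀ t, HasDerivAt a (2 * b t) t := fun t =>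
    (hXX t).congr_deriv (by rw [hsymm (Y t)]; ring)
  have hc : ∀ t, HasDerivAt c (-(c t * a t) * (2 * b t)) t := fun t =>
    (hYY t).congr_deriv (by
      simp only [hcircle t, map_smul, LinearMap.smul_apply, smul_eq_mul, hsymm (Y t) (X t),
        a, b, c]
      ring)
  have ha₀_sq : a 0 ^ 2 = 1 := by rcases hinit0 with h | h <;> simp [a, h]
  have hb : ∀ t, HasDerivAt b (-(c t * (a t + a 0)) * (a t - a 0)) t := fun t =>
    (hXY t).congr_deriv (by
      simp only [hcircle t, map_smul, smul_eq_mul, a, c]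
      linear_combination (-c t) * ha₀_sq)
  have hcont : ∀ {f f' : ℝ → ℝ}, (∀ t, HasDerivAt f (f' t) t) → Continuous f := fun h =>
    continuous_iff_continuousAt.2 fun t => (h t).continuousAt
  have hab : ∀ t, a t - a 0 = 0 ∧ b t = 0 :=
    eq_zero_of_hasDerivAt_linear_pair continuous_const
      ((hcont hc).mul ((hcont ha).add continuous_const)).neg
      (fun t => (ha t).sub_const (a 0)) hb (t₀ := 0) (sub_self _) hinit1
  refine ⟨fun t => sub_eq_zero.1 (hab t).1, fun t => (hab t).2, fun t => ?_⟩
  exact is_const_of_deriv_eq_zero (fun s => (hc s).differentiableAt)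
    (fun s => by rw [(hc s).deriv, (hab s).2, mul_zero, mul_zero]) t 0
end

section
/- Let $\bar p \in \mathbb{E}^n_\nu$ with $\langle \bar p,\bar p\rangle = 1/\kappa$ for some $\kappa \neq 0$, let $V$ be a nondegenerate subspace of $\bar p^\perp$, and let $a \in V^\perp$ with $\langle a, \bar p\rangle = 1$ and $\tilde\kappa := \langle a,a\rangle \neq 0$. Set $c = \bar p - a/\tilde\kappa$ and $W = \mathbb{R}a \oplus V$. Then $\langle c,c\rangle = 1/\kappa - 1/\tilde\kappa$, $\langle c,a\rangle = 0$, and for any $p = c + \tilde p$ with $\tilde p \in W$: $\langle p,p\rangle = 1/\kappa$ if and only if $\langle \tilde p,\tilde p\rangle = 1/\tilde\kappa$. Consequently $\{p \in \mathbb{E}^n_\nu : \langle p,p\rangle = 1/\kappa\} \cap (\bar p + W) = c + \{\tilde p \in W : \langle \tilde p,\tilde p\rangle = 1/\tilde\kappa\}$. -/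
/-! The centre `c` is the `B`-orthogonal projection of `p̄` away from `a`, so `c ⊥ a`; since also
`p̄ ⊥ V` and `a ⊥ V`, the vector `c` is orthogonal to all of `W = ℝa ⊕ V`. Hence
`⟨c + p̃, c + p̃⟩ = ⟨c, c⟩ + ⟨p̃, p̃⟩` for `p̃ ∈ W`, and `⟨c, c⟩ = 1/κ - 1/κ̃` turns the hyperquadric
equation into the sphere equation `⟨p̃, p̃⟩ = 1/κ̃`. As `p̄ - c = a/κ̃ ∈ W`, the affine spaces
`p̄ + W` and `c + W` coincide. -/

section CommRing

variable {R M : Type*} [CommRing R] [AddCommGroup M] [Module R M] (B : LinearMap.BilinForm R M)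

theorem bilin_add_self_of_orthogonal {x y : M} (hxy : B x y = 0) (hyx : B y x = 0) :
    B (x + y) (x + y) = B x x + B y y := by
  simp only [map_add, LinearMap.add_apply, hxy, hyx]
  ring

theorem span_singleton_sup_le_ker {c a : M} {U : Submodule R M} (hca : B c a = 0)
    (hcU : ∀ v ∈ U, B c v = 0) : R ∙ a ⊔ U ≤ LinearMap.ker (B c) :=
  sup_le ((Submodule.span_singleton_le_iff_mem _ _).mpr hca) hcU

theorem bilin_add_self_eq_iff {c : M} {W : Submodule R M} (hsymm : ∀ x y, B x y = B y x)
    (hcW : ∀ w ∈ W, B c w = 0) {r s : R} (hcc : B c c = r - s) :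
    ∀ w ∈ W, (B (c + w) (c + w) = r ↔ B w w = s) := by
  intro w hw
  rw [bilin_add_self_of_orthogonal B (hcW w hw) (hsymm w c ▸ hcW w hw), hcc]
  constructor <;> intro h <;> linear_combination h

end CommRing

section Field

variable {K M : Type*} [Field K] [AddCommGroup M] [Module K M] (B : LinearMap.BilinForm K M)

theorem bilin_sub_inv_smul_left {p a : M} (hpa : B p a = 1) (ha : B a a ≠ 0) :
    B (p - (B a a)⁻¹ • a) a = 0 := by
  simp [hpa, ha]

theorem bilin_sub_inv_smul_self {p a : M} (hpa : B p a = 1) (hap : B a p = 1) (ha : B a a ≠ 0) :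
    B (p - (B a a)⁻¹ • a) (p - (B a a)⁻¹ • a) = B p p - 1 / B a a := by
  simp only [map_sub, map_smul, LinearMap.sub_apply, LinearMap.smul_apply, smul_eq_mul, hpa, hap]
  field_simp
  ring

end Field

theorem inter_translate_eq_of_sub_mem {R M : Type*} [Ring R] [AddCommGroup M] [Module R M]
    {W : Submodule R M} {P : M → Prop} {Q : M → Prop} {p c : M} (hpc : p - c ∈ W)
    (hPQ : ∀ w ∈ W, (P (c + w) ↔ Q w)) :
    {x | P x} ∩ {x | ∃ w ∈ W, x = p + w} = {x | ∃ w ∈ W, Q w ∧ x = c + w} := by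
  ext x
  simp only [Set.mem_inter_iff, Set.mem_ofPred_eq]
  constructor
  · rintro ⟨hx, w, hw, rfl⟩
    have hw' : p - c + w ∈ W := W.add_mem hpc hw
    refine ⟨p - c + w, hw', (hPQ _ hw').mp ?_, by abel⟩
    rwa [show c + (p - c + w) = p + w by abel]
  · rintro ⟨w, hw, hQ, rfl⟩
    exact ⟨(hPQ w hw).mpr hQ, w - (p - c), W.sub_mem hw hpc, by abel⟩

theorem hyperquadric_inter_affine_nonnull_general {V : Type*} [AddCommGroup V]
    [Module ℝ V]
    (B : LinearMap.BilinForm ℝ V)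
    (hsymm : ∀ x y : V, B x y = B y x)
    (pbar : V) (κ : ℝ) (hpbar : B pbar pbar = 1 / κ)
    (Vs : Submodule ℝ V)
    (hVperp : ∀ v ∈ Vs, B pbar v = 0)
    (a : V) (haV : ∀ v ∈ Vs, B a v = 0)
    (hap : B a pbar = 1)
    (κt : ℝ) (hκt : κt = B a a) (hκt0 : κt ≠ 0)
    (c : V) (hc : c = pbar - κt⁻¹ • a)
    (W : Submodule ℝ V) (hW : W = Submodule.span ℝ {a} ⊔ Vs) :
    B c c = 1 / κ - 1 / κt ∧
    B c a = 0 ∧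
    (∀ pt ∈ W, (B (c + pt) (c + pt) = 1 / κ ↔ B pt pt = 1 / κt)) ∧
    {p : V | B p p = 1 / κ} ∩ {x : V | ∃ w ∈ W, x = pbar + w}
      = {x : V | ∃ pt ∈ W, B pt pt = 1 / κt ∧ x = c + pt} := by
  subst hκt hc hW
  have hpa : B pbar a = 1 := hsymm a pbar ▸ hap
  have hcc := bilin_sub_inv_smul_self B hpa hap hκt0
  rw [hpbar] at hcc
  have hca := bilin_sub_inv_smul_left B hpa hκt0
  have hcV : ∀ v ∈ Vs, B (pbar - (B a a)⁻¹ • a) v = 0 := fun v hv => by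
    simp [hVperp v hv, haV v hv]
  have hiff := bilin_add_self_eq_iff B hsymm (span_singleton_sup_le_ker B hca hcV) hcc
  have hpc : pbar - (pbar - (B a a)⁻¹ • a) ∈ ℝ ∙ a ⊔ Vs := by
    rw [sub_sub_cancel]
    exact Submodule.mem_sup_left (Submodule.smul_mem _ _ (Submodule.mem_span_singleton_self a))
  exact ⟨hcc, hca, hiff, inter_translate_eq_of_sub_mem hpc hiff⟩

/-- Non-null sphere in the hyperquadric `𝔼ⁿ_ν(κ)`.  With `⟨p̄,p̄⟩ = 1/κ`,
`V ⊆ p̄^⊥` nondegenerate, `a ∈ V^⊥`, `⟨a,p̄⟩ = 1`, `κ̃ = ⟨a,a⟩ ≠ 0`,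
`c = p̄ - a/κ̃` and `W = ℝa ⊕ V`:  `⟨c,c⟩ = 1/κ - 1/κ̃`, `⟨c,a⟩ = 0`,
for `p̃ ∈ W` one has `⟨c+p̃, c+p̃⟩ = 1/κ ↔ ⟨p̃,p̃⟩ = 1/κ̃`, and hence
`{p : ⟨p,p⟩ = 1/κ} ∩ (p̄ + W) = c + {p̃ ∈ W : ⟨p̃,p̃⟩ = 1/κ̃}`. -/
theorem hyperquadric_inter_affine_nonnull {V : Type*} [AddCommGroup V]
    [Module ℝ V] [FiniteDimensional ℝ V]
    (B : LinearMap.BilinForm ℝ V)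
    (hsymm : ∀ x y : V, B x y = B y x)
    (pbar : V) (κ : ℝ) (hκ : κ ≠ 0) (hpbar : B pbar pbar = 1 / κ)
    (Vs : Submodule ℝ V)
    (hVperp : ∀ v ∈ Vs, B pbar v = 0)
    (hVnd : ∀ v ∈ Vs, (∀ w ∈ Vs, B v w = 0) → v = 0)
    (a : V) (haV : ∀ v ∈ Vs, B a v = 0)
    (hap : B a pbar = 1)
    (κt : ℝ) (hκt : κt = B a a) (hκt0 : κt ≠ 0)
    (c : V) (hc : c = pbar - κt⁻¹ • a)
    (W : Submodule ℝ V) (hW : W = Submodule.span ℝ {a} ⊔ Vs) :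
    B c c = 1 / κ - 1 / κt ∧
    B c a = 0 ∧
    (∀ pt ∈ W, (B (c + pt) (c + pt) = 1 / κ ↔ B pt pt = 1 / κt)) ∧
    {p : V | B p p = 1 / κ} ∩ {x : V | ∃ w ∈ W, x = pbar + w}
      = {x : V | ∃ pt ∈ W, B pt pt = 1 / κt ∧ x = c + pt} :=
  hyperquadric_inter_affine_nonnull_general B hsymm pbar κ hpbar Vs hVperp a haV hap κt hκt hκt0 c
    hc W hW
end

section
/- With the initial data of a non-null standard warped product decomposition of $\mathbb{E}^n_\nu$ in canonical form — i.e., $\mathbb{E}^n_\nu = V_0 \oplus \bigoplus_{i=1}^k V_i$ orthogonally, $a_1,\dots,a_k \in V_0$ pairwise orthogonal with $\kappa_i := \langle a_i,a_i\rangle \neq 0$, $\bar p \in V_0$ with $\langle\bar p, a_i\rangle = 1$, $c_i := \bar p - a_i/\kappa_i$, $N_i = c_i + \{q \in \mathbb{R}a_i \oplus V_i : \langle q,q\rangle = 1/\kappa_i\}$, $N_0 = \{p \in V_0 : \langle a_i,p\rangle > 0 \text{ for all } i\}$ — the map $\psi(p_0,\dots,p_k) = p_0 + \sum_{i=1}^k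 \langle a_i,p_0\rangle(p_i - \bar p)$ satisfies $\langle\psi(p_0,\dots,p_k), \psi(p_0,\dots,p_k)\rangle = \langle p_0, p_0\rangle$ for all $(p_0,\dots,p_k) \in N_0 \times N_1 \times \cdots \times N_k$. -/
/-- Non-null standard warped product decomposition of `𝔼ⁿ_ν` in canonical form:
`𝔼ⁿ_ν = V₀ ⊕ ⨁ᵢ Vᵢ` orthogonally, `aᵢ ∈ V₀` pairwise orthogonal with
`κᵢ = ⟨aᵢ,aᵢ⟩ ≠ 0`, `p̄ ∈ V₀` with `⟨p̄,aᵢ⟩ = 1`, `cᵢ = p̄ - aᵢ/κᵢ`,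
`Nᵢ = cᵢ + {q ∈ ℝaᵢ ⊕ Vᵢ : ⟨q,q⟩ = 1/κᵢ}`, `N₀ = {p ∈ V₀ : ⟨aᵢ,p⟩ > 0 ∀i}`.
The map `ψ(p₀,…,p_k) = p₀ + ∑ᵢ ⟨aᵢ,p₀⟩(pᵢ - p̄)` satisfies
`⟨ψ(p₀,…,p_k), ψ(p₀,…,p_k)⟩ = ⟨p₀,p₀⟩`. -/
theorem warped_product_norm_eq {V : Type*} [AddCommGroup V] [Module ℝ V]
    [FiniteDimensional ℝ V]
    (B : LinearMap.BilinForm ℝ V)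
    (hsymm : ∀ x y : V, B x y = B y x)
    (hnondeg : ∀ v : V, (∀ w : V, B v w = 0) → v = 0)
    (k : ℕ)
    (V0 : Submodule ℝ V) (Vi : Fin k → Submodule ℝ V)
    (hdecomp : V0 ⊔ (⨆ i, Vi i) = ⊤)
    (horth0 : ∀ i, ∀ x ∈ V0, ∀ y ∈ Vi i, B x y = 0)
    (horthij : ∀ i j, i ≠ j → ∀ x ∈ Vi i, ∀ y ∈ Vi j, B x y = 0)
    (hV0nd : ∀ v ∈ V0, (∀ w ∈ V0, B v w = 0) → v = 0)
    (hVind : ∀ i, ∀ v ∈ Vi i, (∀ w ∈ Vi i, B v w = 0) → v = 0)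
    (a : Fin k → V) (haV0 : ∀ i, a i ∈ V0)
    (haorth : ∀ i j, i ≠ j → B (a i) (a j) = 0)
    (κ : Fin k → ℝ) (hκ : ∀ i, κ i = B (a i) (a i)) (hκ0 : ∀ i, κ i ≠ 0)
    (pbar : V) (hpbar : pbar ∈ V0) (hpa : ∀ i, B pbar (a i) = 1)
    (c : Fin k → V) (hc : ∀ i, c i = pbar - (κ i)⁻¹ • a i)
    (N : Fin k → Set V)
    (hN : ∀ i, N i = {x : V |
      x - c i ∈ Submodule.span ℝ {a i} ⊔ Vi i ∧
      B (x - c i) (x - c i) = 1 / κ i})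
    (N0 : Set V) (hN0 : N0 = {p : V | p ∈ V0 ∧ ∀ i, 0 < B (a i) p})
    (p0 : V) (hp0 : p0 ∈ N0)
    (p : Fin k → V) (hp : ∀ i, p i ∈ N i) :
    B (p0 + ∑ i, B (a i) p0 • (p i - pbar))
      (p0 + ∑ i, B (a i) p0 • (p i - pbar)) = B p0 p0 := by

  obtain ⟨hp0V0, hpos⟩ : p0 ∈ V0 ∧ ∀ i, 0 < B (a i) p0 := by rw [hN0] at hp0; exact hp0
  have hq : ∀ i, p i - c i ∈ Submodule.span ℝ {a i} ⊔ Vi i ∧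
      B (p i - c i) (p i - c i) = 1 / κ i := fun i => by
    have := hp i; rwa [hN i] at this
  have hdec : ∀ i, ∃ t z, z ∈ Vi i ∧ p i - c i = t • a i + z := fun i => by
    obtain ⟨y, hy, z, hz, hyz⟩ := Submodule.mem_sup.mp (hq i).1
    obtain ⟨t, ht⟩ := Submodule.mem_span_singleton.mp hy
    exact ⟨t, z, hz, by rw [← hyz, ← ht]⟩
  choose t v hvV hqd using hdec
  have hBav : ∀ i j, B (a i) (v j) = 0 := fun i j => horth0 j (a i) (haV0 i) (v j) (hvV j)
  have hBva : ∀ i j, B (v i) (a j) = 0 := fun i j => (hsymm _ _).trans (hBav j i)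
  have hBp0v : ∀ i, B p0 (v i) = 0 := fun i => horth0 i p0 hp0V0 (v i) (hvV i)
  have hBvv : ∀ i j, i ≠ j → B (v i) (v j) = 0 :=
    fun i j h => horthij i j h _ (hvV i) _ (hvV j)
  have hd : ∀ i, p i - pbar = (t i • a i + v i) - (κ i)⁻¹ • a i := fun i => by
    have h1 := hqd i
    rw [hc i] at h1
    have h2 : p i - pbar = (p i - (pbar - (κ i)⁻¹ • a i)) - (κ i)⁻¹ • a i := by abel
    rw [h2, h1]
  have hBaq : ∀ i, B (a i) (p i - c i) = t i * κ i := fun i => by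
    rw [hqd i]; simp [map_add, map_smul, smul_eq_mul, hBav, ← hκ]
  have hBp0d : ∀ i, B p0 (p i - pbar) = B (a i) p0 * (t i - (κ i)⁻¹) := fun i => by
    rw [hd i]
    simp only [map_sub, map_add, map_smul, smul_eq_mul, hBp0v, hsymm p0 (a i)]
    ring
  have hBdd_ne : ∀ i j, i ≠ j → B (p i - pbar) (p j - pbar) = 0 := fun i j hij => by
    rw [hd i, hd j]
    simp [map_sub, map_add, map_smul, LinearMap.sub_apply, LinearMap.add_apply,
      LinearMap.smul_apply, smul_eq_mul, hBav, hBva, hBvv i j hij, haorth i j hij]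
  have hBdd_eq : ∀ i, B (p i - pbar) (p i - pbar) = 2 * (κ i)⁻¹ - 2 * t i := fun i => by
    have hd' : p i - pbar = (p i - c i) - (κ i)⁻¹ • a i := by rw [hc i]; abel
    have hqa : B (p i - c i) (a i) = t i * κ i := (hsymm _ _).trans (hBaq i)
    have h2 := (hq i).2
    have h3 := hBaq i
    generalize hg : p i - c i = q at hd' hqa h2 h3
    rw [hd']
    simp only [map_sub, map_smul, LinearMap.sub_apply, LinearMap.smul_apply, smul_eq_mul,
      h2, h3, hqa, ← hκ]
    field_simp [hκ0 i]
    ring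
  simp only [map_add, map_sum, map_smul, LinearMap.add_apply, LinearMap.sum_apply,
    LinearMap.smul_apply, smul_eq_mul]
  have h3 : ∀ j, ∑ i, B (a i) p0 * B (p i - pbar) (p j - pbar)
      = B (a j) p0 * (2 * (κ j)⁻¹ - 2 * t j) := fun j => by
    rw [Finset.sum_eq_single j]
    · rw [hBdd_eq j]
    · intro i _ hij
      rw [hBdd_ne i j hij, mul_zero]
    · intro h; exact absurd (Finset.mem_univ j) h
  have h4 : ∀ j, B (p j - pbar) p0 = B (a j) p0 * (t j - (κ j)⁻¹) := fun j => by
    rw [hsymm, hBp0d j]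
  have e1 : ∑ x, B (a x) p0 * B (p x - pbar) p0
      = ∑ x, B (a x) p0 * (B (a x) p0 * (t x - (κ x)⁻¹)) :=
    Finset.sum_congr rfl fun x _ => by rw [h4 x]
  have e2 : ∑ x, B (a x) p0 * (B p0 (p x - pbar)
        + ∑ y, B (a y) p0 * B (p y - pbar) (p x - pbar))
      = ∑ x, B (a x) p0 * (B (a x) p0 * (t x - (κ x)⁻¹)
        + B (a x) p0 * (2 * (κ x)⁻¹ - 2 * t x)) :=
    Finset.sum_congr rfl fun x _ => by rw [hBp0d x, h3 x]
  rw [e1, e2, add_assoc, ← Finset.sum_add_distrib]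
  have : ∑ x, (B (a x) p0 * (B (a x) p0 * (t x - (κ x)⁻¹))
      + B (a x) p0 * (B (a x) p0 * (t x - (κ x)⁻¹)
        + B (a x) p0 * (2 * (κ x)⁻¹ - 2 * t x))) = 0 :=
    Finset.sum_eq_zero fun x _ => by ring
  rw [this, add_zero]
end

section
/- With the data of a non-null standard warped product decomposition of $\mathbb{E}^n_\nu$ in canonical form (as in the preceding context), the map $\psi(p_0,\dots,p_k) = P_0 p_0 + \sum_{i=1}^k \langle a_i,p_0\rangle(p_i - c_i)$ is injective on $N_0 \times N_1 \times \cdots \times N_k$. -/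
/-!
The image `ψ(p₀, p) = P₀p₀ + ∑ᵢ sᵢ (pᵢ - cᵢ)`, with `sᵢ = ⟨aᵢ, p₀⟩ > 0`, is a sum of vectors lying in
the pairwise orthogonal, nondegenerate subspaces `W₀` and `ℝaᵢ ⊕ Vᵢ`, so each summand is determined
by `ψ`. The summand `sᵢ (pᵢ - cᵢ)` has square norm `sᵢ² / κᵢ`, which recovers `sᵢ > 0` and then `pᵢ`.
Finally `p₀ - q₀ ∈ V₀` is orthogonal to every `aᵢ`, hence lies in `W₀`, where `P₀` is the identity.
-/

open Submodule

namespace LinearMap.BilinForm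

section CommRing

variable {R M : Type*} [CommRing R] [AddCommGroup M] [Module R M] {B : LinearMap.BilinForm R M}

theorem eq_of_sum_eq_sum_of_orthogonal {ι : Type*} [Fintype ι] {U : ι → Submodule R M}
    (horth : ∀ i j, i ≠ j → ∀ x ∈ U i, ∀ y ∈ U j, B x y = 0)
    (hnd : ∀ i, ∀ v ∈ U i, (∀ w ∈ U i, B v w = 0) → v = 0)
    {x y : ι → M} (hx : ∀ i, x i ∈ U i) (hy : ∀ i, y i ∈ U i)
    (h : ∑ i, x i = ∑ i, y i) : x = y := by
  funext j
  refine sub_eq_zero.1 <| hnd j _ (sub_mem (hx j) (hy j)) fun w hw => ?_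
  have hsum : B (∑ i, (x i - y i)) w = 0 := by
    rw [Finset.sum_sub_distrib, h, sub_self, map_zero, LinearMap.zero_apply]
  rwa [map_sum, LinearMap.sum_apply, Finset.sum_eq_single j
    (fun i _ hij => horth i j hij _ (sub_mem (hx i) (hy i)) w hw)
    (fun hj => absurd (Finset.mem_univ j) hj)] at hsum

theorem eq_of_add_sum_eq_add_sum_of_orthogonal (hsymm : ∀ x y : M, B x y = B y x)
    {ι : Type*} [Fintype ι] {U₀ : Submodule R M} {U : ι → Submodule R M}
    (h₀ : ∀ i, ∀ x ∈ U₀, ∀ y ∈ U i, B x y = 0)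
    (horth : ∀ i j, i ≠ j → ∀ x ∈ U i, ∀ y ∈ U j, B x y = 0)
    (hnd₀ : ∀ v ∈ U₀, (∀ w ∈ U₀, B v w = 0) → v = 0)
    (hnd : ∀ i, ∀ v ∈ U i, (∀ w ∈ U i, B v w = 0) → v = 0)
    {x₀ y₀ : M} {x y : ι → M} (hx₀ : x₀ ∈ U₀) (hy₀ : y₀ ∈ U₀)
    (hx : ∀ i, x i ∈ U i) (hy : ∀ i, y i ∈ U i)
    (h : x₀ + ∑ i, x i = y₀ + ∑ i, y i) : x₀ = y₀ ∧ x = y := by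
  have key := eq_of_sum_eq_sum_of_orthogonal (B := B) (U := fun o => Option.elim o U₀ U)
    (x := fun o => Option.elim o x₀ x) (y := fun o => Option.elim o y₀ y) ?_ ?_ ?_ ?_
    (by simpa only [Fintype.sum_option, Option.elim] using h)
  · exact ⟨congrFun key none, funext fun i => congrFun key (some i)⟩
  · rintro (_ | i) (_ | j) hij x hx y hy
    · exact absurd rfl hij
    · exact h₀ j x hx y hy
    · exact (hsymm x y).trans (h₀ i y hy x hx)
    · exact horth i j (fun hij' => hij (congrArg some hij')) x hx y hy
  · rintro (_ | i)
    exacts [hnd₀, hnd i]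
  · rintro (_ | i)
    exacts [hx₀, hx i]
  · rintro (_ | i)
    exacts [hy₀, hy i]

theorem apply_eq_zero_of_mem_span_singleton_sup {x a y : M} {U : Submodule R M}
    (ha : B x a = 0) (hU : ∀ u ∈ U, B x u = 0) (hy : y ∈ span R {a} ⊔ U) : B x y = 0 :=
  (sup_le ((span_singleton_le_iff_mem a _).2 ha) hU : span R {a} ⊔ U ≤ LinearMap.ker (B x)) hy

theorem apply_eq_zero_of_mem_span_singleton_sup_of_mem_span_singleton_sup
    (hsymm : ∀ x y : M, B x y = B y x) {a b : M} {U U' : Submodule R M}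
    (hab : B a b = 0) (haU' : ∀ u ∈ U', B a u = 0) (hbU : ∀ u ∈ U, B b u = 0)
    (hUU' : ∀ x ∈ U, ∀ y ∈ U', B x y = 0) {x y : M}
    (hx : x ∈ span R {a} ⊔ U) (hy : y ∈ span R {b} ⊔ U') : B x y = 0 := by
  refine apply_eq_zero_of_mem_span_singleton_sup ?_ (fun u hu => ?_) hy
  · rw [hsymm]
    exact apply_eq_zero_of_mem_span_singleton_sup ((hsymm b a).trans hab) hbU hx
  · rw [hsymm]
    exact apply_eq_zero_of_mem_span_singleton_sup ((hsymm u a).trans (haU' u hu))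
      (fun v hv => (hsymm u v).trans (hUU' v hv u hu)) hx

theorem apply_eq_self_of_mem {W : Submodule R M} {P : M → M} (hPmem : ∀ x, P x ∈ W)
    (hPorth : ∀ x, ∀ w ∈ W, B (x - P x) w = 0)
    (hW : ∀ v ∈ W, (∀ w ∈ W, B v w = 0) → v = 0) {x : M} (hx : x ∈ W) : P x = x :=
  (sub_eq_zero.1 (hW _ (sub_mem hx (hPmem x)) (hPorth x))).symm

variable [NoZeroDivisors R]

theorem nondegenerate_span_singleton_sup (hsymm : ∀ x y : M, B x y = B y x) {a : M}
    {U : Submodule R M} (ha : B a a ≠ 0) (haU : ∀ u ∈ U, B a u = 0)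
    (hU : ∀ v ∈ U, (∀ w ∈ U, B v w = 0) → v = 0) :
    ∀ v ∈ span R {a} ⊔ U, (∀ w ∈ span R {a} ⊔ U, B v w = 0) → v = 0 := by
  intro v hv hvperp
  obtain ⟨_, hra, x, hx, rfl⟩ := mem_sup.1 hv
  obtain ⟨r, rfl⟩ := mem_span_singleton.1 hra
  have hr : r = 0 := by
    have h := hvperp a (mem_sup_left (mem_span_singleton_self a))
    rw [map_add, map_smul, LinearMap.add_apply, LinearMap.smul_apply, smul_eq_mul, hsymm x a, haU x hx,
      add_zero] at h
    exact (mul_eq_zero.1 h).resolve_right ha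
  subst hr
  have hx0 : x = 0 := hU x hx fun w hw => by
    simpa using hvperp w (mem_sup_right hw)
  simp [hx0]

theorem mem_of_mem_sup_iSup_span_singleton {ι : Type*} [Fintype ι] {W : Submodule R M}
    {a : ι → M} (haa : ∀ i, B (a i) (a i) ≠ 0) (haorth : ∀ i j, i ≠ j → B (a i) (a j) = 0)
    (haW : ∀ i, ∀ w ∈ W, B (a i) w = 0) {d : M} (hd : d ∈ W ⊔ ⨆ i, span R {a i})
    (hda : ∀ i, B (a i) d = 0) : d ∈ W := by
  obtain ⟨w, hw, y, hy, rfl⟩ := mem_sup.1 hd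
  rw [← span_range_eq_iSup] at hy
  obtain ⟨r, rfl⟩ := (mem_span_range_iff_exists_fun R).1 hy
  have hr : ∀ j, r j = 0 := fun j => by
    have h := hda j
    rw [map_add, haW j w hw, zero_add, map_sum, Finset.sum_eq_single j
      (fun i _ hij => by rw [map_smul, haorth j i (Ne.symm hij), smul_zero])
      (fun hj => absurd (Finset.mem_univ j) hj), map_smul, smul_eq_mul] at h
    exact (mul_eq_zero.1 h).resolve_right (haa j)
  simpa [hr] using hw

end CommRing

theorem eq_of_smul_eq_smul_of_pos {K M : Type*} [Field K] [LinearOrder K] [IsStrictOrderedRing K]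
    [AddCommGroup M] [Module K M] {B : LinearMap.BilinForm K M} {s t : K} {x y : M}
    (hxy : B x x = B y y) (hx : B x x ≠ 0) (hs : 0 < s) (ht : 0 < t) (h : s • x = t • y) :
    s = t ∧ x = y := by
  have hsq : s ^ 2 * B x x = t ^ 2 * B x x := by
    have h' := congrArg (fun v => B v v) h
    simp only [map_smul, LinearMap.smul_apply, smul_eq_mul] at h'
    rw [hxy] at h' ⊢
    linear_combination h'
  have hst : s = t := (pow_left_inj₀ hs.le ht.le two_ne_zero).1 (mul_right_cancel₀ hx hsq)
  subst hst
  exact ⟨rfl, smul_right_injective M hs.ne' h⟩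

end LinearMap.BilinForm

open LinearMap.BilinForm

theorem warped_product_injective_general {V : Type*} [AddCommGroup V] [Module ℝ V]
    (B : LinearMap.BilinForm ℝ V)
    (hsymm : ∀ x y : V, B x y = B y x)
    (k : ℕ)
    (W0 : Submodule ℝ V) (Vi : Fin k → Submodule ℝ V)
    (a : Fin k → V)
    (κ : Fin k → ℝ) (hκ : ∀ i, κ i = B (a i) (a i)) (hκ0 : ∀ i, κ i ≠ 0)
    (haorth : ∀ i j, i ≠ j → B (a i) (a j) = 0)
    (haW0 : ∀ i, ∀ w ∈ W0, B (a i) w = 0)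
    (haVi : ∀ i j, ∀ v ∈ Vi j, B (a i) v = 0)
    (hW0Vi : ∀ i, ∀ w ∈ W0, ∀ v ∈ Vi i, B w v = 0)
    (horthij : ∀ i j, i ≠ j → ∀ x ∈ Vi i, ∀ y ∈ Vi j, B x y = 0)
    (hW0nd : ∀ v ∈ W0, (∀ w ∈ W0, B v w = 0) → v = 0)
    (hVind : ∀ i, ∀ v ∈ Vi i, (∀ w ∈ Vi i, B v w = 0) → v = 0)
    (V0 : Submodule ℝ V) (hV0 : V0 = W0 ⊔ (⨆ i, Submodule.span ℝ {a i}))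
    (c : Fin k → V)
    (N : Fin k → Set V)
    (hN : ∀ i, N i = {x : V |
      x - c i ∈ Submodule.span ℝ {a i} ⊔ Vi i ∧
      B (x - c i) (x - c i) = 1 / κ i})
    (N0 : Set V) (hN0 : N0 = {p : V | p ∈ V0 ∧ ∀ i, 0 < B (a i) p})
    (P0 : V →ₗ[ℝ] V)
    (hP0mem : ∀ x : V, P0 x ∈ W0)
    (hP0orth : ∀ x : V, ∀ w ∈ W0, B (x - P0 x) w = 0)
    (ψ : V → (Fin k → V) → V)
    (hψ : ∀ p0 p, ψ p0 p = P0 p0 + ∑ i, B (a i) p0 • (p i - c i)) :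
    ∀ p0 ∈ N0, ∀ q0 ∈ N0, ∀ p q : Fin k → V,
      (∀ i, p i ∈ N i) → (∀ i, q i ∈ N i) →
      ψ p0 p = ψ q0 q → p0 = q0 ∧ p = q := by
  intro p0 hp0 q0 hq0 p q hp hq hpq
  rw [hN0] at hp0 hq0
  simp only [hN, Set.mem_ofPred_eq] at hp hq
  rw [hψ, hψ] at hpq
  have hκa i : B (a i) (a i) ≠ 0 := hκ i ▸ hκ0 i
  obtain ⟨hP0eq, hsummands⟩ := eq_of_add_sum_eq_add_sum_of_orthogonal hsymm
    (fun i x hx y hy => apply_eq_zero_of_mem_span_singleton_sup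
      ((hsymm x (a i)).trans (haW0 i x hx)) (hW0Vi i x hx) hy)
    (fun i j hij x hx y hy => apply_eq_zero_of_mem_span_singleton_sup_of_mem_span_singleton_sup
      hsymm (haorth i j hij) (haVi i j) (haVi j i) (horthij i j hij) hx hy)
    hW0nd (fun i => nondegenerate_span_singleton_sup hsymm (hκa i) (haVi i i) (hVind i))
    (hP0mem p0) (hP0mem q0) (fun i => smul_mem _ _ (hp i).1) (fun i => smul_mem _ _ (hq i).1) hpq
  have hscale i : B (a i) p0 = B (a i) q0 ∧ p i - c i = q i - c i :=
    eq_of_smul_eq_smul_of_pos ((hp i).2.trans (hq i).2.symm) ((hp i).2 ▸ one_div_ne_zero (hκ0 i))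
      (hp0.2 i) (hq0.2 i) (congrFun hsummands i)
  refine ⟨?_, funext fun i => sub_left_injective (hscale i).2⟩
  have hW0 : p0 - q0 ∈ W0 := mem_of_mem_sup_iSup_span_singleton hκa haorth haW0
    (hV0 ▸ sub_mem hp0.1 hq0.1) fun i => by rw [map_sub, (hscale i).1, sub_self]
  rw [← sub_eq_zero, ← apply_eq_self_of_mem hP0mem hP0orth hW0nd hW0, map_sub, hP0eq, sub_self]

/-- Injectivity of the non-null standard warped product decomposition map
`ψ(p₀,…,p_k) = P₀p₀ + ∑ᵢ ⟨aᵢ,p₀⟩(pᵢ - cᵢ)` on `N₀ × N₁ × ⋯ × N_k`. -/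
theorem warped_product_injective {V : Type*} [AddCommGroup V] [Module ℝ V]
    [FiniteDimensional ℝ V]
    (B : LinearMap.BilinForm ℝ V)
    (hsymm : ∀ x y : V, B x y = B y x)
    (hnondeg : ∀ v : V, (∀ w : V, B v w = 0) → v = 0)
    (k : ℕ)
    (W0 : Submodule ℝ V) (Vi : Fin k → Submodule ℝ V)
    (a : Fin k → V)
    (κ : Fin k → ℝ) (hκ : ∀ i, κ i = B (a i) (a i)) (hκ0 : ∀ i, κ i ≠ 0)
    (haorth : ∀ i j, i ≠ j → B (a i) (a j) = 0)
    (haW0 : ∀ i, ∀ w ∈ W0, B (a i) w = 0)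
    (haVi : ∀ i j, ∀ v ∈ Vi j, B (a i) v = 0)
    (hW0Vi : ∀ i, ∀ w ∈ W0, ∀ v ∈ Vi i, B w v = 0)
    (horthij : ∀ i j, i ≠ j → ∀ x ∈ Vi i, ∀ y ∈ Vi j, B x y = 0)
    (hdecomp : (W0 ⊔ (⨆ i, Submodule.span ℝ {a i})) ⊔ (⨆ i, Vi i) = ⊤)
    (hW0nd : ∀ v ∈ W0, (∀ w ∈ W0, B v w = 0) → v = 0)
    (hVind : ∀ i, ∀ v ∈ Vi i, (∀ w ∈ Vi i, B v w = 0) → v = 0)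
    (V0 : Submodule ℝ V) (hV0 : V0 = W0 ⊔ (⨆ i, Submodule.span ℝ {a i}))
    (pbar : V) (hpbar : pbar ∈ V0) (hpa : ∀ i, B pbar (a i) = 1)
    (c : Fin k → V) (hc : ∀ i, c i = pbar - (κ i)⁻¹ • a i)
    (N : Fin k → Set V)
    (hN : ∀ i, N i = {x : V |
      x - c i ∈ Submodule.span ℝ {a i} ⊔ Vi i ∧
      B (x - c i) (x - c i) = 1 / κ i})
    (N0 : Set V) (hN0 : N0 = {p : V | p ∈ V0 ∧ ∀ i, 0 < B (a i) p})
    (P0 : V →ₗ[ℝ] V)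
    (hP0mem : ∀ x : V, P0 x ∈ W0)
    (hP0orth : ∀ x : V, ∀ w ∈ W0, B (x - P0 x) w = 0)
    (ψ : V → (Fin k → V) → V)
    (hψ : ∀ p0 p, ψ p0 p = P0 p0 + ∑ i, B (a i) p0 • (p i - c i)) :
    ∀ p0 ∈ N0, ∀ q0 ∈ N0, ∀ p q : Fin k → V,
      (∀ i, p i ∈ N i) → (∀ i, q i ∈ N i) →
      ψ p0 p = ψ q0 q → p0 = q0 ∧ p = q :=
  warped_product_injective_general B hsymm k W0 Vi a κ hκ hκ0 haorth haW0 haVi hW0Vi horthij hW0nd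
    hVind V0 hV0 c N hN N0 hN0 P0 hP0mem hP0orth ψ hψ
end

section
/- With the data of a non-null standard warped product decomposition of $\mathbb{E}^n_\nu$ in canonical form, the image of $\psi(p_0,\dots,p_k) = P_0 p_0 + \sum_{i=1}^k \langle a_i,p_0\rangle(p_i - c_i)$ on $N_0 \times \cdots \times N_k$ is exactly $\{p \in \mathbb{E}^n_\nu : \operatorname{sgn}\langle P_i p, P_i p\rangle = \operatorname{sgn}\kappa_i \text{ for each } i = 1,\dots,k\}$, where $P_i$ is the orthogonal projection onto $W_i = \mathbb{R}a_i \oplus V_i$. An explicit inverse is given componentwise by $q_0 = P_0 p + \sum_i \epsilon_i |\kappa_i|^{-1/2} \|P_i p\| a_i$ and $q_i = c_i + |\kappa_i|^{-1/2} P_i p / \|P_i p\|$, where $\epsilon_i = \operatorname{sgn}\kappa_i$ and $\|v\| = \sqrt{|\langle v,v\rangle|}$. -/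
private lemma sign_pos_of_eq_one {r : ℝ} (h : Real.sign r = 1) : 0 < r := by
  rcases lt_trichotomy r 0 with h1|h1|h1
  · rw [Real.sign_of_neg h1] at h; norm_num at h
  · rw [h1, Real.sign_zero] at h; norm_num at h
  · exact h1

private lemma sign_neg_of_eq_neg_one {r : ℝ} (h : Real.sign r = -1) : r < 0 := by
  rcases lt_trichotomy r 0 with h1|h1|h1
  · exact h1
  · rw [h1, Real.sign_zero] at h; norm_num at h
  · rw [Real.sign_of_pos h1] at h; norm_num at h

private lemma wβne {κ β : ℝ} (hκ : κ ≠ 0) (hs : Real.sign β = Real.sign κ) : β ≠ 0 := by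
  intro h
  apply hκ
  rw [h, Real.sign_zero] at hs
  exact Real.sign_eq_zero_iff.mp hs.symm

private lemma waux1 {κ β : ℝ} (hκ : κ ≠ 0) :
    Real.sign κ / Real.sqrt |κ| * Real.sqrt |β| * κ = Real.sqrt |κ| * Real.sqrt |β| := by
  rcases hκ.lt_or_gt with h|h
  · rw [Real.sign_of_neg h, abs_of_neg h]
    have h2 : Real.sqrt (-κ) * Real.sqrt (-κ) = -κ := Real.mul_self_sqrt (by linarith)
    have h3 : Real.sqrt (-κ) ≠ 0 := by
      have : (0:ℝ) < Real.sqrt (-κ) := Real.sqrt_pos.mpr (by linarith)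
      linarith
    field_simp
    linear_combination (-Real.sqrt |β|) * h2
  · rw [Real.sign_of_pos h, abs_of_pos h]
    have h2 : Real.sqrt κ * Real.sqrt κ = κ := Real.mul_self_sqrt h.le
    have h3 : Real.sqrt κ ≠ 0 := by
      have : (0:ℝ) < Real.sqrt κ := Real.sqrt_pos.mpr h
      linarith
    field_simp
    linear_combination (-Real.sqrt |β|) * h2

private lemma waux2 {κ β : ℝ} (hκ : κ ≠ 0) (hs : Real.sign β = Real.sign κ) :
    (Real.sqrt |κ|)⁻¹ / Real.sqrt |β| * ((Real.sqrt |κ|)⁻¹ / Real.sqrt |β| * β) = 1 / κ := by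
  rcases hκ.lt_or_gt with h|h
  · have hb : β < 0 := sign_neg_of_eq_neg_one (by rw [hs, Real.sign_of_neg h])
    rw [abs_of_neg h, abs_of_neg hb]
    have h2 : Real.sqrt (-κ) * Real.sqrt (-κ) = -κ := Real.mul_self_sqrt (by linarith)
    have h3 : Real.sqrt (-β) * Real.sqrt (-β) = -β := Real.mul_self_sqrt (by linarith)
    have h4 : Real.sqrt (-κ) ≠ 0 := by
      have : (0:ℝ) < Real.sqrt (-κ) := Real.sqrt_pos.mpr (by linarith); linarith
    have h5 : Real.sqrt (-β) ≠ 0 := by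
      have : (0:ℝ) < Real.sqrt (-β) := Real.sqrt_pos.mpr (by linarith); linarith
    have h6 : Real.sqrt (-κ) * Real.sqrt (-κ) * (Real.sqrt (-β) * Real.sqrt (-β)) = -κ * -β := by
      rw [h2, h3]
    field_simp
    linear_combination (-1 : ℝ) * h6
  · have hb : 0 < β := sign_pos_of_eq_one (by rw [hs, Real.sign_of_pos h])
    rw [abs_of_pos h, abs_of_pos hb]
    have h2 : Real.sqrt κ * Real.sqrt κ = κ := Real.mul_self_sqrt h.le
    have h3 : Real.sqrt β * Real.sqrt β = β := Real.mul_self_sqrt hb.le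
    have h4 : Real.sqrt κ ≠ 0 := by
      have : (0:ℝ) < Real.sqrt κ := Real.sqrt_pos.mpr h; linarith
    have h5 : Real.sqrt β ≠ 0 := by
      have : (0:ℝ) < Real.sqrt β := Real.sqrt_pos.mpr hb; linarith
    have h6 : Real.sqrt κ * Real.sqrt κ * (Real.sqrt β * Real.sqrt β) = κ * β := by
      rw [h2, h3]
    field_simp
    linear_combination (-1 : ℝ) * h6

private lemma waux3 {κ β : ℝ} (hκ : κ ≠ 0) (hβ : β ≠ 0) :
    Real.sqrt |κ| * Real.sqrt |β| * ((Real.sqrt |κ|)⁻¹ / Real.sqrt |β|) = 1 := by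
  have h4 : Real.sqrt |κ| ≠ 0 := by
    have : (0:ℝ) < Real.sqrt |κ| := Real.sqrt_pos.mpr (abs_pos.mpr hκ); linarith
  have h5 : Real.sqrt |β| ≠ 0 := by
    have : (0:ℝ) < Real.sqrt |β| := Real.sqrt_pos.mpr (abs_pos.mpr hβ); linarith
  field_simp



/-- Image and explicit inverse of the non-null standard warped product
decomposition `ψ(p₀,…,p_k) = P₀p₀ + ∑ᵢ ⟨aᵢ,p₀⟩(pᵢ - cᵢ)`:  the image is
`{p : sgn⟨Pᵢp, Pᵢp⟩ = sgn κᵢ for all i}`, with inverse components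
`q₀ = P₀p + ∑ᵢ εᵢ |κᵢ|^{-1/2} ‖Pᵢp‖ aᵢ` and
`qᵢ = cᵢ + |κᵢ|^{-1/2} Pᵢp/‖Pᵢp‖`, where `‖v‖ = √|⟨v,v⟩|`, `εᵢ = sgn κᵢ`. -/
theorem warped_product_image_and_inverse {V : Type*} [AddCommGroup V] [Module ℝ V]
    [FiniteDimensional ℝ V]
    (B : LinearMap.BilinForm ℝ V)
    (hsymm : ∀ x y : V, B x y = B y x)
    (hnondeg : ∀ v : V, (∀ w : V, B v w = 0) → v = 0)
    (k : ℕ)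
    (W0 : Submodule ℝ V) (Vi : Fin k → Submodule ℝ V)
    (a : Fin k → V)
    (κ : Fin k → ℝ) (hκ : ∀ i, κ i = B (a i) (a i)) (hκ0 : ∀ i, κ i ≠ 0)
    (haorth : ∀ i j, i ≠ j → B (a i) (a j) = 0)
    (haW0 : ∀ i, ∀ w ∈ W0, B (a i) w = 0)
    (haVi : ∀ i j, ∀ v ∈ Vi j, B (a i) v = 0)
    (hW0Vi : ∀ i, ∀ w ∈ W0, ∀ v ∈ Vi i, B w v = 0)
    (horthij : ∀ i j, i ≠ j → ∀ x ∈ Vi i, ∀ y ∈ Vi j, B x y = 0)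
    (hdecomp : (W0 ⊔ (⨆ i, Submodule.span ℝ {a i})) ⊔ (⨆ i, Vi i) = ⊤)
    (hW0nd : ∀ v ∈ W0, (∀ w ∈ W0, B v w = 0) → v = 0)
    (hVind : ∀ i, ∀ v ∈ Vi i, (∀ w ∈ Vi i, B v w = 0) → v = 0)
    (V0 : Submodule ℝ V) (hV0 : V0 = W0 ⊔ (⨆ i, Submodule.span ℝ {a i}))
    (pbar : V) (hpbar : pbar ∈ V0) (hpa : ∀ i, B pbar (a i) = 1)
    (c : Fin k → V) (hc : ∀ i, c i = pbar - (κ i)⁻¹ • a i)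
    (N : Fin k → Set V)
    (hN : ∀ i, N i = {x : V |
      x - c i ∈ Submodule.span ℝ {a i} ⊔ Vi i ∧
      B (x - c i) (x - c i) = 1 / κ i})
    (N0 : Set V) (hN0 : N0 = {p : V | p ∈ V0 ∧ ∀ i, 0 < B (a i) p})
    (P0 : V →ₗ[ℝ] V)
    (hP0mem : ∀ x : V, P0 x ∈ W0)
    (hP0orth : ∀ x : V, ∀ w ∈ W0, B (x - P0 x) w = 0)
    (P : Fin k → (V →ₗ[ℝ] V))
    (hPmem : ∀ i, ∀ x : V, P i x ∈ Submodule.span ℝ {a i} ⊔ Vi i)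
    (hPorth : ∀ i, ∀ x : V, ∀ w ∈ Submodule.span ℝ {a i} ⊔ Vi i,
      B (x - P i x) w = 0)
    (ψ : V → (Fin k → V) → V)
    (hψ : ∀ p0 p, ψ p0 p = P0 p0 + ∑ i, B (a i) p0 • (p i - c i)) :
    {x : V | ∃ p0 ∈ N0, ∃ p : Fin k → V, (∀ i, p i ∈ N i) ∧ ψ p0 p = x}
      = {x : V | ∀ i, Real.sign (B (P i x) (P i x)) = Real.sign (κ i)} ∧
    (∀ x : V, (∀ i, Real.sign (B (P i x) (P i x)) = Real.sign (κ i)) →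
      (P0 x + ∑ i, (Real.sign (κ i) / Real.sqrt |κ i|
          * Real.sqrt |B (P i x) (P i x)|) • a i) ∈ N0 ∧
      (∀ i, (c i + ((Real.sqrt |κ i|)⁻¹
          / Real.sqrt |B (P i x) (P i x)|) • P i x) ∈ N i) ∧
      ψ (P0 x + ∑ i, (Real.sign (κ i) / Real.sqrt |κ i|
            * Real.sqrt |B (P i x) (P i x)|) • a i)
        (fun i => c i + ((Real.sqrt |κ i|)⁻¹
            / Real.sqrt |B (P i x) (P i x)|) • P i x) = x) := by
  classical
  have hBsub : ∀ u v w : V, B (u - v) w = B u w - B v w := by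
    intro u v w; simp [map_sub]
  set Wf : Fin k → Submodule ℝ V := fun i => Submodule.span ℝ {a i} ⊔ Vi i with hWfdef
  have haWf : ∀ i, a i ∈ Wf i := fun i =>
    Submodule.mem_sup_left (Submodule.mem_span_singleton_self _)
  have hViWf : ∀ i, Vi i ≤ Wf i := fun i => le_sup_right
  have hsubdec : ∀ i, ∀ z ∈ Wf i, ∃ t : ℝ, ∃ u ∈ Vi i, z = t • a i + u := by
    intro i z hz
    rcases Submodule.mem_sup.mp hz with ⟨y, hy, u, hu, rfl⟩
    rcases Submodule.mem_span_singleton.mp hy with ⟨t, rfl⟩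
    exact ⟨t, u, hu, rfl⟩
  have hW0Wf : ∀ i, ∀ y ∈ W0, ∀ z ∈ Wf i, B y z = 0 := by
    intro i y hy z hz
    rcases hsubdec i z hz with ⟨t, u, hu, rfl⟩
    have h1 : B y (a i) = 0 := by rw [hsymm]; exact haW0 i y hy
    have h2 : B y u = 0 := hW0Vi i y hy u hu
    simp [map_add, map_smul, h1, h2]
  have hWfWf : ∀ i j, i ≠ j → ∀ y ∈ Wf i, ∀ z ∈ Wf j, B y z = 0 := by
    intro i j hij y hy z hz
    rcases hsubdec i y hy with ⟨s, u, hu, rfl⟩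
    rcases hsubdec j z hz with ⟨t, v, hv, rfl⟩
    have h1 : B (a i) (a j) = 0 := haorth i j hij
    have h2 : B (a i) v = 0 := haVi i j v hv
    have h3 : B u (a j) = 0 := by rw [hsymm]; exact haVi j i u hu
    have h4 : B u v = 0 := horthij i j hij u hu v hv
    simp [map_add, map_smul, LinearMap.add_apply, LinearMap.smul_apply, smul_eq_mul,
      h1, h2, h3, h4]
  have hWfnd : ∀ i, ∀ v ∈ Wf i, (∀ w ∈ Wf i, B v w = 0) → v = 0 := by
    intro i v hv h
    rcases hsubdec i v hv with ⟨t, u, hu, rfl⟩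
    have hua : B u (a i) = 0 := by rw [hsymm]; exact haVi i i u hu
    have h1 : B (t • a i + u) (a i) = 0 := h _ (haWf i)
    have ht : t = 0 := by
      have h2 : t * κ i = 0 := by
        rw [hκ i]
        simpa [map_add, LinearMap.add_apply, LinearMap.smul_apply, smul_eq_mul, hua]
          using h1
      exact (mul_eq_zero.mp h2).resolve_right (hκ0 i)
    have hu0 : u = 0 := by
      refine hVind i u hu (fun w hw => ?_)
      have h3 := h w (hViWf i hw)
      rw [ht] at h3
      simpa using h3
    rw [ht, hu0]; simp
  have hPid : ∀ i, ∀ w ∈ Wf i, P i w = w := by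
    intro i w hw
    have hmem : P i w - w ∈ Wf i := Submodule.sub_mem _ (hPmem i w) hw
    have h0 : P i w - w = 0 := by
      refine hWfnd i _ hmem (fun z hz => ?_)
      have h1 := hPorth i w z hz
      rw [hBsub] at h1
      rw [hBsub]; linarith
    have := sub_eq_zero.mp h0
    exact this
  have hPzero : ∀ i, ∀ x : V, (∀ w ∈ Wf i, B x w = 0) → P i x = 0 := by
    intro i x hx
    refine hWfnd i _ (hPmem i x) (fun z hz => ?_)
    have h1 := hPorth i x z hz
    rw [hBsub] at h1
    have h2 := hx z hz
    linarith
  have hP0id : ∀ w ∈ W0, P0 w = w := by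
    intro w hw
    have hmem : P0 w - w ∈ W0 := Submodule.sub_mem _ (hP0mem w) hw
    have h0 : P0 w - w = 0 := by
      refine hW0nd _ hmem (fun z hz => ?_)
      have h1 := hP0orth w z hz
      rw [hBsub] at h1
      rw [hBsub]; linarith
    exact sub_eq_zero.mp h0
  have hP0zero : ∀ x : V, (∀ w ∈ W0, B x w = 0) → P0 x = 0 := by
    intro x hx
    refine hW0nd _ (hP0mem x) (fun z hz => ?_)
    have h1 := hP0orth x z hz
    rw [hBsub] at h1
    have h2 := hx z hz
    linarith
  have hcomplete : ∀ x : V, P0 x + ∑ i, P i x = x := by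
    intro x
    set y := x - (P0 x + ∑ i, P i x) with hy
    have hyW0 : ∀ w ∈ W0, B y w = 0 := by
      intro w hw
      have h0 := hP0orth x w hw
      rw [hBsub] at h0
      have hterm : ∀ i ∈ Finset.univ, B (P i x) w = 0 := fun i _ => by
        rw [hsymm]; exact hW0Wf i w hw _ (hPmem i x)
      rw [hy, hBsub, map_add, LinearMap.add_apply, map_sum, LinearMap.sum_apply,
        Finset.sum_congr rfl hterm, Finset.sum_const_zero]
      linarith
    have hyWf : ∀ j, ∀ w ∈ Wf j, B y w = 0 := by
      intro j w hw
      have h0 := hPorth j x w hw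
      rw [hBsub] at h0
      have hP0w : B (P0 x) w = 0 := hW0Wf j _ (hP0mem x) w hw
      have hsum : ∑ i, B (P i x) w = B (P j x) w := by
        refine Finset.sum_eq_single_of_mem j (Finset.mem_univ j) (fun i _ hij => ?_)
        exact hWfWf i j hij _ (hPmem i x) w hw
      rw [hy, hBsub, map_add, LinearMap.add_apply, map_sum, LinearMap.sum_apply,
        hsum, hP0w]
      linarith
    have hyall : ∀ w : V, B y w = 0 := by
      intro w
      have hw : w ∈ (W0 ⊔ (⨆ i, Submodule.span ℝ {a i})) ⊔ (⨆ i, Vi i) := by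
        rw [hdecomp]; exact Submodule.mem_top
      have hle : (W0 ⊔ (⨆ i, Submodule.span ℝ {a i})) ⊔ (⨆ i, Vi i)
          ≤ LinearMap.ker (B y) := by
        refine sup_le (sup_le ?_ ?_) ?_
        · intro z hz; exact LinearMap.mem_ker.mpr (hyW0 z hz)
        · refine iSup_le fun i z hz => ?_
          exact LinearMap.mem_ker.mpr (hyWf i z (Submodule.mem_sup_left hz))
        · refine iSup_le fun i z hz => ?_
          exact LinearMap.mem_ker.mpr (hyWf i z (Submodule.mem_sup_right hz))
      exact LinearMap.mem_ker.mp (hle hw)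
    have hy0 : y = 0 := hnondeg y hyall
    have := sub_eq_zero.mp hy0
    exact this.symm
  -- the main inverse statement
  have main : ∀ x : V, (∀ i, Real.sign (B (P i x) (P i x)) = Real.sign (κ i)) →
      (P0 x + ∑ i, (Real.sign (κ i) / Real.sqrt |κ i|
          * Real.sqrt |B (P i x) (P i x)|) • a i) ∈ N0 ∧
      (∀ i, (c i + ((Real.sqrt |κ i|)⁻¹
          / Real.sqrt |B (P i x) (P i x)|) • P i x) ∈ N i) ∧
      ψ (P0 x + ∑ i, (Real.sign (κ i) / Real.sqrt |κ i|
            * Real.sqrt |B (P i x) (P i x)|) • a i)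
        (fun i => c i + ((Real.sqrt |κ i|)⁻¹
            / Real.sqrt |B (P i x) (P i x)|) • P i x) = x := by
    intro x hx
    set β : Fin k → ℝ := fun i => B (P i x) (P i x) with hβdef
    set coeff : Fin k → ℝ := fun i => Real.sign (κ i) / Real.sqrt |κ i| * Real.sqrt |β i|
      with hcoeffdef
    set q0 : V := P0 x + ∑ i, coeff i • a i with hq0def
    have hβne : ∀ i, β i ≠ 0 := fun i => wβne (hκ0 i) (hx i)
    -- B (a j) q0
    have hBaq0 : ∀ j, B (a j) q0 = Real.sqrt |κ j| * Real.sqrt |β j| := by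
      intro j
      have h1 : B (a j) (P0 x) = 0 := haW0 j _ (hP0mem x)
      have hsum : ∑ i, coeff i * B (a j) (a i) = coeff j * κ j := by
        have hs := Finset.sum_eq_single_of_mem (f := fun i => coeff i * B (a j) (a i))
          j (Finset.mem_univ j) (fun i _ hij => by
            show coeff i * B (a j) (a i) = 0
            rw [haorth j i (Ne.symm hij), mul_zero])
        rw [hs, hκ j]
      rw [hq0def, map_add, map_sum]
      simp only [map_smul, smul_eq_mul]
      rw [h1, hsum, zero_add, hcoeffdef]
      exact waux1 (hκ0 j)
    have hBaq0pos : ∀ j, 0 < B (a j) q0 := by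
      intro j
      rw [hBaq0 j]
      exact mul_pos (Real.sqrt_pos.mpr (abs_pos.mpr (hκ0 j)))
        (Real.sqrt_pos.mpr (abs_pos.mpr (hβne j)))
    refine ⟨?_, ?_, ?_⟩
    · -- q0 ∈ N0
      rw [hN0]
      refine ⟨?_, hBaq0pos⟩
      rw [hV0]
      refine Submodule.add_mem _ (Submodule.mem_sup_left (hP0mem x)) ?_
      refine Submodule.sum_mem _ (fun i _ => ?_)
      refine Submodule.smul_mem _ _ (Submodule.mem_sup_right ?_)
      exact Submodule.mem_iSup_of_mem i (Submodule.mem_span_singleton_self _)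
    · -- q i ∈ N i
      intro i
      rw [hN i]
      constructor
      · simp only [add_sub_cancel_left]
        exact Submodule.smul_mem _ _ (hPmem i x)
      · simp only [add_sub_cancel_left, map_smul, LinearMap.smul_apply, smul_eq_mul]
        exact waux2 (hκ0 i) (hx i)
    · -- ψ q0 q = x
      rw [hψ]
      have hP0q0 : P0 q0 = P0 x := by
        rw [hq0def, map_add, map_sum]
        have h1 : P0 (P0 x) = P0 x := hP0id _ (hP0mem x)
        have h2 : ∀ i ∈ Finset.univ, P0 (coeff i • a i) = 0 := fun i _ => by
          rw [map_smul, hP0zero (a i) (fun w hw => haW0 i w hw), smul_zero]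
        rw [h1, Finset.sum_congr rfl h2, Finset.sum_const_zero, add_zero]
      rw [hP0q0]
      have hterm : ∀ i ∈ Finset.univ, B (a i) q0
          • (c i + ((Real.sqrt |κ i|)⁻¹ / Real.sqrt |β i|) • P i x - c i) = P i x := by
        intro i _
        rw [add_sub_cancel_left, hBaq0 i, smul_smul, waux3 (hκ0 i) (hβne i), one_smul]
      rw [Finset.sum_congr rfl hterm]
      exact hcomplete x
  refine ⟨?_, main⟩
  ext x
  simp only [Set.mem_setOf_eq]
  constructor
  · rintro ⟨p0, hp0, p, hp, rfl⟩
    rw [hN0] at hp0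
    obtain ⟨hp0V, hp0a⟩ := hp0
    intro j
    have hpj : ∀ i, p i - c i ∈ Wf i ∧ B (p i - c i) (p i - c i) = 1 / κ i := by
      intro i
      have := hp i
      rw [hN i] at this
      exact this
    have hPj : P j (ψ p0 p) = B (a j) p0 • (p j - c j) := by
      rw [hψ, map_add, map_sum]
      have h1 : P j (P0 p0) = 0 :=
        hPzero j _ (fun w hw => hW0Wf j _ (hP0mem p0) w hw)
      have hsum : ∑ i, P j (B (a i) p0 • (p i - c i)) = B (a j) p0 • (p j - c j) := by
        have hs := Finset.sum_eq_single_of_mem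
          (f := fun i => P j (B (a i) p0 • (p i - c i)))
          j (Finset.mem_univ j) (fun i _ hij => by
            show P j (B (a i) p0 • (p i - c i)) = 0
            rw [map_smul, hPzero j _ (fun w hw => hWfWf i j hij _ (hpj i).1 w hw),
              smul_zero])
        rw [hs]
        show P j (B (a j) p0 • (p j - c j)) = _
        rw [map_smul, hPid j _ (hpj j).1]
      rw [h1, hsum, zero_add]
    rw [hPj]
    have hval : B (B (a j) p0 • (p j - c j)) (B (a j) p0 • (p j - c j))
        = B (a j) p0 * B (a j) p0 * (1 / κ j) := by
      simp only [map_smul, LinearMap.map_smul₂, LinearMap.smul_apply, smul_eq_mul,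
        (hpj j).2]
      ring
    rw [hval]
    have ht : 0 < B (a j) p0 := hp0a j
    rcases (hκ0 j).lt_or_gt with h|h
    · have hneg : B (a j) p0 * B (a j) p0 * (1 / κ j) < 0 := by
        apply mul_neg_of_pos_of_neg (mul_pos ht ht)
        exact div_neg_of_pos_of_neg one_pos h
      rw [Real.sign_of_neg hneg, Real.sign_of_neg h]
    · have hpos : 0 < B (a j) p0 * B (a j) p0 * (1 / κ j) := by
        apply mul_pos (mul_pos ht ht)
        exact div_pos one_pos h
      rw [Real.sign_of_pos hpos, Real.sign_of_pos h]
  · intro hx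
    obtain ⟨h1, h2, h3⟩ := main x hx
    exact ⟨_, h1, _, h2, h3⟩
end

section
/- Let $V_0 \oplus V_1 = \mathbb{E}^n_\nu$ be an orthogonal decomposition into nondegenerate subspaces, let $a, b \in V_0$ be lightlike with $\langle a,b\rangle = 1$ and $a, b \perp V_1$, and let $P_0$ (resp. $P_1$) be the orthogonal projection onto $W_0 := V_0 \cap \operatorname{span}\{a,b\}^\perp$ (resp. onto $V_1$). Define for $p_0 \in N_0 := \{p \in V_0 : \langle a,p\rangle > 0\}$ and $p_1 \in N_1 := b + \{v - \tfrac{1}{2}\langle v,v\rangle a : v \in V_1\}$: $\psi(p_0,p_1) = P_0 p_0 + (\langle b,p_0\rangle - \tfrac{1}{2}\langle a,p_0\rangle\langle P_1 p_1, P_1 p_1\rangle) a + \langle a,p_0\rangle b + \langle a,p_0\rangle P_1 p_1$. Then $\psi$ is a bijection from $N_0 \times N_1$ onto $\{p \in \mathbb{E}^n_\nu : \langle a,p\rangle > 0\}$, and $\langle\psi(p_0,p_1),\psi(p_0,p_1)\rangle = \langle p_0,p_0\rangle$. -/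
/-- Null standard warped product decomposition of `𝔼ⁿ_ν` in canonical form:
with `𝔼ⁿ_ν = V₀ ⊕ V₁` orthogonal and nondegenerate, lightlike `a, b ∈ V₀`
with `⟨a,b⟩ = 1` orthogonal to `V₁`, projections `P₀` onto
`W₀ = V₀ ∩ span{a,b}^⊥` and `P₁` onto `V₁`, the map
`ψ(p₀,p₁) = P₀p₀ + (⟨b,p₀⟩ - ½⟨a,p₀⟩⟨P₁p₁,P₁p₁⟩)a + ⟨a,p₀⟩b + ⟨a,p₀⟩P₁p₁`
is a bijection from `N₀ × N₁` onto `{p : ⟨a,p⟩ > 0}`, and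
`⟨ψ(p₀,p₁),ψ(p₀,p₁)⟩ = ⟨p₀,p₀⟩`. -/
theorem null_warped_product_bijection {V : Type*} [AddCommGroup V] [Module ℝ V]
    [FiniteDimensional ℝ V]
    (B : LinearMap.BilinForm ℝ V)
    (hsymm : ∀ x y : V, B x y = B y x)
    (hnondeg : ∀ v : V, (∀ w : V, B v w = 0) → v = 0)
    (V0 V1 : Submodule ℝ V)
    (horth : ∀ x ∈ V0, ∀ y ∈ V1, B x y = 0)
    (hV0nd : ∀ v ∈ V0, (∀ w ∈ V0, B v w = 0) → v = 0)
    (hV1nd : ∀ v ∈ V1, (∀ w ∈ V1, B v w = 0) → v = 0)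
    (hdecomp : V0 ⊔ V1 = ⊤)
    (a b : V) (ha : a ∈ V0) (hb : b ∈ V0)
    (ha0 : B a a = 0) (hane : a ≠ 0)
    (hb0 : B b b = 0) (hbne : b ≠ 0)
    (hab : B a b = 1)
    (P0 : V →ₗ[ℝ] V)
    (hP0mem : ∀ x : V, P0 x ∈ V0 ∧ B a (P0 x) = 0 ∧ B b (P0 x) = 0)
    (hP0compl : ∀ x : V, x - P0 x ∈ Submodule.span ℝ ({a, b} : Set V) ⊔ V1)
    (P1 : V →ₗ[ℝ] V)
    (hP1mem : ∀ x : V, P1 x ∈ V1)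
    (hP1compl : ∀ x : V, x - P1 x ∈ V0)
    (N0 : Set V) (hN0 : N0 = {p : V | p ∈ V0 ∧ 0 < B a p})
    (N1 : Set V) (hN1 : N1 = {x : V | ∃ v ∈ V1, x = b + v - (B v v / 2) • a})
    (ψ : V → V → V)
    (hψ : ∀ p0 p1, ψ p0 p1 = P0 p0
      + (B b p0 - B a p0 * B (P1 p1) (P1 p1) / 2) • a
      + B a p0 • b + B a p0 • P1 p1) :
    Set.BijOn (fun q : V × V => ψ q.1 q.2) (N0 ×ˢ N1) {p : V | 0 < B a p} ∧
    (∀ p0 ∈ N0, ∀ p1 ∈ N1, B (ψ p0 p1) (ψ p0 p1) = B p0 p0) := by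
  have hba : B b a = 1 := (hsymm b a).trans hab
  have hV01 : ∀ w : V, w ∈ V0 → w ∈ V1 → w = 0 := fun w h0 h1 =>
    hV0nd w h0 fun u hu => (hsymm w u).trans (horth u hu w h1)
  have hP1V0 : ∀ x, x ∈ V0 → P1 x = 0 := by
    intro x hx
    refine hV01 _ ?_ (hP1mem x)
    have h := Submodule.sub_mem V0 hx (hP1compl x)
    simpa using h
  have hP1V1 : ∀ x, x ∈ V1 → P1 x = x := by
    intro x hx
    exact (sub_eq_zero.mp (hV01 _ (hP1compl x) (Submodule.sub_mem _ hx (hP1mem x)))).symm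
  have haV1 : ∀ v ∈ V1, B a v = 0 := fun v hv => horth a ha v hv
  have hbV1 : ∀ v ∈ V1, B b v = 0 := fun v hv => horth b hb v hv
  -- master decomposition
  have hdec : ∀ x : V, x = P0 x + B b x • a + B a x • b + P1 x := by
    intro x
    obtain ⟨y, hy, z, hz, hyz⟩ := Submodule.mem_sup.mp (hP0compl x)
    obtain ⟨α, β, rfl⟩ := Submodule.mem_span_pair.mp hy
    have hx : x = P0 x + (α • a + β • b + z) := by
      have h0 : x = P0 x + (x - P0 x) := by abel
      rw [← hyz] at h0
      exact h0
    have hax : B a x = β := by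
      conv_lhs => rw [hx]
      simp [map_add, map_smul, smul_eq_mul, (hP0mem x).2.1, ha0, hab, haV1 z hz]
    have hbx : B b x = α := by
      conv_lhs => rw [hx]
      simp [map_add, map_smul, smul_eq_mul, (hP0mem x).2.2, hb0, hba, hbV1 z hz]
    have hzx : P1 x = z := by
      refine sub_eq_zero.mp (hV01 (P1 x - z) ?_ (Submodule.sub_mem _ (hP1mem x) hz))
      have h1 : P1 x - z = (x - z) - (x - P1 x) := by abel
      rw [h1]
      refine Submodule.sub_mem _ ?_ (hP1compl x)
      have h2 : x - z = P0 x + α • a + β • b := by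
        conv_lhs => rw [hx]
        abel
      rw [h2]
      exact add_mem (add_mem (hP0mem x).1 (Submodule.smul_mem _ _ ha))
        (Submodule.smul_mem _ _ hb)
    rw [hax, hbx, hzx]
    conv_lhs => rw [hx]
    abel
  have hP0eq : ∀ x : V, P0 x = x - (B b x • a + B a x • b + P1 x) := by
    intro x
    have h : P0 x + (B b x • a + B a x • b + P1 x) = x := by
      conv_rhs => rw [hdec x]
      abel
    exact eq_sub_of_add_eq h
  -- components of a generic element in canonical form
  have L : ∀ (w : V) (c t d : ℝ) (v : V), w ∈ V0 → B a w = 0 → B b w = 0 → v ∈ V1 →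
      B a (w + c • a + t • b + d • v) = t ∧
      B b (w + c • a + t • b + d • v) = c ∧
      P1 (w + c • a + t • b + d • v) = d • v ∧
      P0 (w + c • a + t • b + d • v) = w ∧
      B (w + c • a + t • b + d • v) (w + c • a + t • b + d • v)
        = B w w + 2 * c * t + d * d * B v v := by
    intro w c t d v hw hwa hwb hv
    have hwa' : B w a = 0 := (hsymm w a).trans hwa
    have hwb' : B w b = 0 := (hsymm w b).trans hwb
    have hav : B a v = 0 := haV1 v hv
    have hbv : B b v = 0 := hbV1 v hv
    have hva : B v a = 0 := (hsymm v a).trans hav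
    have hvb : B v b = 0 := (hsymm v b).trans hbv
    have hwv : B w v = 0 := horth w hw v hv
    have hvw : B v w = 0 := (hsymm v w).trans hwv
    have h1 : B a (w + c • a + t • b + d • v) = t := by
      simp [map_add, map_smul, smul_eq_mul, hwa, ha0, hab, hav]
    have h2 : B b (w + c • a + t • b + d • v) = c := by
      simp [map_add, map_smul, smul_eq_mul, hwb, hb0, hba, hbv]
    have h3 : P1 (w + c • a + t • b + d • v) = d • v := by
      simp [map_add, map_smul, hP1V0 w hw, hP1V0 a ha, hP1V0 b hb, hP1V1 v hv]
    have h4 : P0 (w + c • a + t • b + d • v) = w := by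
      rw [hP0eq, h1, h2, h3]; abel
    refine ⟨h1, h2, h3, h4, ?_⟩
    simp only [map_add, map_smul, LinearMap.add_apply, LinearMap.smul_apply, smul_eq_mul,
      hwa, hwb, hwa', hwb', ha0, hb0, hab, hba, hav, hbv, hva, hvb, hwv, hvw]
    ring
  -- decomposition of elements of V0 in the generic form
  have hdec0 : ∀ p0 ∈ V0, p0 = P0 p0 + B b p0 • a + B a p0 • b + (0:ℝ) • (0:V) := by
    intro p0 h0
    have h := hdec p0
    rw [hP1V0 p0 h0] at h
    simpa using h
  have hnorm0 : ∀ p0 ∈ V0, B p0 p0 = B (P0 p0) (P0 p0) + 2 * B b p0 * B a p0 := by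
    intro p0 h0
    obtain ⟨-, -, -, -, h5⟩ := L (P0 p0) (B b p0) (B a p0) 0 0 (hP0mem p0).1
      (hP0mem p0).2.1 (hP0mem p0).2.2 (Submodule.zero_mem V1)
    have hc : B p0 p0
        = B (P0 p0 + B b p0 • a + B a p0 • b + (0:ℝ) • (0:V))
            (P0 p0 + B b p0 • a + B a p0 • b + (0:ℝ) • (0:V)) :=
      congrArg (fun x => B x x) (hdec0 p0 h0)
    rw [hc, h5]; ring
  -- P1 of elements of N1
  have hP1N1 : ∀ v ∈ V1, P1 (b + v - (B v v / 2) • a) = v := by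
    intro v hv
    have h1 : P1 (b + v - (B v v / 2) • a) = P1 b + P1 v - (B v v / 2) • P1 a := by
      simp [map_add, map_sub, map_smul]
    rw [h1, hP1V0 b hb, hP1V0 a ha, hP1V1 v hv]
    simp
  have hψcomp : ∀ (p0 : V), ∀ v ∈ V1, ψ p0 (b + v - (B v v / 2) • a)
      = P0 p0 + (B b p0 - B a p0 * B v v / 2) • a + B a p0 • b + B a p0 • v := by
    intro p0 v hv
    rw [hψ, hP1N1 v hv]
  -- norm preservation
  have hnormψ : ∀ p0 ∈ N0, ∀ p1 ∈ N1, B (ψ p0 p1) (ψ p0 p1) = B p0 p0 := by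
    intro p0 hp0 p1 hp1
    rw [hN0] at hp0
    obtain ⟨h0, ht⟩ := hp0
    rw [hN1] at hp1
    obtain ⟨v, hv, rfl⟩ := hp1
    rw [hψcomp p0 v hv]
    obtain ⟨-, -, -, -, h5⟩ := L (P0 p0) (B b p0 - B a p0 * B v v / 2) (B a p0) (B a p0) v
      (hP0mem p0).1 (hP0mem p0).2.1 (hP0mem p0).2.2 hv
    rw [h5, hnorm0 p0 h0]
    ring
  refine ⟨⟨?_, ?_, ?_⟩, hnormψ⟩
  · -- MapsTo
    rintro ⟨p0, p1⟩ hm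
    simp only [Set.mem_prod] at hm
    obtain ⟨hp0, hp1⟩ := hm
    rw [hN0] at hp0
    obtain ⟨h0, ht⟩ := hp0
    rw [hN1] at hp1
    obtain ⟨v, hv, rfl⟩ := hp1
    simp only [Set.mem_setOf_eq]
    rw [hψcomp p0 v hv,
      (L (P0 p0) (B b p0 - B a p0 * B v v / 2) (B a p0) (B a p0) v
        (hP0mem p0).1 (hP0mem p0).2.1 (hP0mem p0).2.2 hv).1]
    exact ht
  · -- InjOn
    rintro ⟨p0, p1⟩ hm ⟨p0', p1'⟩ hm' heq
    simp only [Set.mem_prod] at hm hm'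
    obtain ⟨hp0, hp1⟩ := hm
    obtain ⟨hp0', hp1'⟩ := hm'
    rw [hN0] at hp0 hp0'
    obtain ⟨h0, ht⟩ := hp0
    obtain ⟨h0', ht'⟩ := hp0'
    rw [hN1] at hp1 hp1'
    obtain ⟨v, hv, rfl⟩ := hp1
    obtain ⟨v', hv', rfl⟩ := hp1'
    simp only at heq
    rw [hψcomp p0 v hv, hψcomp p0' v' hv'] at heq
    obtain ⟨h1, h2, h3, h4, -⟩ := L (P0 p0) (B b p0 - B a p0 * B v v / 2) (B a p0) (B a p0) v
      (hP0mem p0).1 (hP0mem p0).2.1 (hP0mem p0).2.2 hv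
    obtain ⟨h1', h2', h3', h4', -⟩ := L (P0 p0') (B b p0' - B a p0' * B v' v' / 2) (B a p0')
      (B a p0') v' (hP0mem p0').1 (hP0mem p0').2.1 (hP0mem p0').2.2 hv'
    have e1 : B a p0 = B a p0' := by rw [← h1, ← h1', heq]
    have e2 : B b p0 - B a p0 * B v v / 2 = B b p0' - B a p0' * B v' v' / 2 := by
      rw [← h2, ← h2', heq]
    have e3 : B a p0 • v = B a p0' • v' := by rw [← h3, ← h3', heq]
    have e4 : P0 p0 = P0 p0' := by rw [← h4, ← h4', heq]
    have ev : v = v' := by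
      rw [e1] at e3
      exact smul_right_injective V (ne_of_gt ht') e3
    have es : B b p0 = B b p0' := by
      rw [ev, e1] at e2
      linarith
    have ep0 : p0 = p0' := by
      rw [hdec0 p0 h0, hdec0 p0' h0', e1, es, e4]
    have ep1 : b + v - (B v v / 2) • a = b + v' - (B v' v' / 2) • a := by rw [ev]
    exact Prod.ext ep0 ep1
  · -- SurjOn
    intro p hp
    simp only [Set.mem_setOf_eq] at hp
    have htne : B a p ≠ 0 := ne_of_gt hp
    have huV1 : P1 p ∈ V1 := hP1mem p
    have hvV1 : (B a p)⁻¹ • P1 p ∈ V1 := Submodule.smul_mem _ _ huV1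
    set u : V := P1 p with hu
    set v : V := (B a p)⁻¹ • u with hvdef
    have hp0V0 : p - u + (B u u / (2 * B a p)) • a ∈ V0 :=
      Submodule.add_mem _ (hP1compl p) (Submodule.smul_mem _ _ ha)
    have hBa0 : B a (p - u + (B u u / (2 * B a p)) • a) = B a p := by
      simp [map_add, map_sub, map_smul, smul_eq_mul, haV1 u huV1, ha0]
    have hBb0 : B b (p - u + (B u u / (2 * B a p)) • a)
        = B b p + B u u / (2 * B a p) := by
      simp [map_add, map_sub, map_smul, smul_eq_mul, hbV1 u huV1, hba]
    have hBvv : B v v = (B a p)⁻¹ * ((B a p)⁻¹ * B u u) := by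
      rw [hvdef]
      simp [map_smul, smul_eq_mul]
    refine ⟨(p - u + (B u u / (2 * B a p)) • a, b + v - (B v v / 2) • a), ?_, ?_⟩
    · constructor
      · rw [hN0]
        exact ⟨hp0V0, by rw [hBa0]; exact hp⟩
      · rw [hN1]
        exact ⟨v, hvV1, rfl⟩
    · simp only
      rw [hψcomp _ v hvV1]
      have hcoef : B b (p - u + (B u u / (2 * B a p)) • a)
          - B a (p - u + (B u u / (2 * B a p)) • a) * B v v / 2 = B b p := by
        rw [hBa0, hBb0, hBvv]
        field_simp
        ring
      have htv : B a (p - u + (B u u / (2 * B a p)) • a) • v = u := by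
        rw [hBa0, hvdef, smul_smul, mul_inv_cancel₀ htne, one_smul]
      rw [hcoef, htv, hBa0]
      have hP00 : P0 (p - u + (B u u / (2 * B a p)) • a) = P0 p := by
        rw [hP0eq, hP0eq p, hBa0, hBb0, hP1V0 _ hp0V0, hu]
        rw [add_smul]
        abel
      rw [hP00]
      conv_rhs => rw [hdec p]
end
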